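/- Uniform Gronwall inequality: let g, h, y be nonnegative locally integrable functions on (t₀, ∞) with y differentiable (y' locally integrable), satisfying y'(t) ≤ g(t)y(t) + h(t) for t ≥ t₀, and suppose there are positive constants r, a₁, a₂, a₃ such that for all t ≥ t₀: ∫_t^{t+r} g ≤ a₁, ∫_t^{t+r} h ≤ a₂, ∫_t^{t+r} y ≤ a₃. Then y(t + r) ≤ (a₃/r + a₂)·exp(a₁) for all t ≥ t₀. -/

import Mathlib

/-!
Classical Gronwall on `[s, t + r]` for `t < s`, with the integrating factor `exp (-∫ₛ g)`, gives
`y (t + r) ≤ (y s + a₂) * exp a₁`; averaging over `s ∈ (t, t + r)` and using `∫ y ≤ a₃` gives the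
bound. As `g` is only integrable, the integrating factor is merely absolutely continuous, so the
product rule is used in its absolutely continuous form. The function `y` is absolutely continuous
because it is differentiable everywhere with derivative bounded above by the integrable `g y + h`.
-/

open MeasureTheory intervalIntegral Set Filter Topology

theorem AbsolutelyContinuousOnInterval.congr {X : Type*} [PseudoMetricSpace X] {f g : ℝ → X}
    {a b : ℝ} (hf : AbsolutelyContinuousOnInterval f a b) (hfg : EqOn f g (uIcc a b)) :
    AbsolutelyContinuousOnInterval g a b := by
  refine hf.congr' (eventually_inf_principal.2 (Eventually.of_forall fun E hE => ?_))
  refine Finset.sum_congr rfl fun i hi => ?_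
  rw [hfg (hE.1 i hi).1, hfg (hE.1 i hi).2]

theorem LipschitzOnWith.comp_absolutelyContinuousOnInterval {X Y : Type*} [PseudoMetricSpace X]
    [PseudoMetricSpace Y] {φ : X → Y} {f : ℝ → X} {K : NNReal} {s : Set X} {a b : ℝ}
    (hφ : LipschitzOnWith K φ s) (hf : AbsolutelyContinuousOnInterval f a b)
    (hfs : MapsTo f (uIcc a b) s) : AbsolutelyContinuousOnInterval (φ ∘ f) a b := by
  have hK := Tendsto.const_mul (K : ℝ) hf
  rw [mul_zero] at hK
  refine squeeze_zero' (Eventually.of_forall fun E => Finset.sum_nonneg fun i _ => dist_nonneg)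
    (eventually_inf_principal.2 (Eventually.of_forall fun E hE => ?_)) hK
  rw [Finset.mul_sum]
  exact Finset.sum_le_sum fun i hi =>
    hφ.dist_le_mul _ (hfs (hE.1 i hi).1) _ (hfs (hE.1 i hi).2)

theorem ContDiff.comp_absolutelyContinuousOnInterval {φ f : ℝ → ℝ} {a b : ℝ}
    (hφ : ContDiff ℝ 1 φ) (hf : AbsolutelyContinuousOnInterval f a b) :
    AbsolutelyContinuousOnInterval (φ ∘ f) a b := by
  obtain ⟨C, hC⟩ := hf.exists_bound
  obtain ⟨K, hK⟩ := hφ.contDiffOn.exists_lipschitzOnWith (s := Icc (-C) C) one_ne_zero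
    (convex_Icc _ _) isCompact_Icc
  exact hK.comp_absolutelyContinuousOnInterval hf fun x hx => abs_le.1 (hC x hx)

theorem intervalIntegrable_deriv_of_le {y y' φ : ℝ → ℝ} {a b : ℝ} (hab : a ≤ b)
    (hcont : ContinuousOn y (Icc a b)) (hderiv : ∀ x ∈ Ioo a b, HasDerivAt y (y' x) x)
    (hφ : IntervalIntegrable φ volume a b) (hle : ∀ x ∈ Ioo a b, y' x ≤ φ x) :
    IntervalIntegrable y' volume a b := by
  -- `ψ` is monotone, so `ψ'` is integrable, and `y' = φ - ψ'` almost everywhere.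
  set ψ : ℝ → ℝ := fun x => (∫ u in a..x, φ u) - y x
  have hφ_sub {c d : ℝ} (hc : c ∈ Icc a b) (hd : d ∈ Icc a b) : IntervalIntegrable φ volume c d :=
    hφ.mono_set (by rw [uIcc_of_le hab]; exact uIcc_subset_Icc hc hd)
  have hψ : MonotoneOn ψ (uIcc a b) := by
    rw [uIcc_of_le hab]
    intro c hc d hd hcd
    have hy_cd : y d - y c ≤ ∫ u in c..d, φ u :=
      sub_le_integral_of_hasDeriv_right_of_le hcd (hcont.mono (Icc_subset_Icc hc.1 hd.2))
        (fun x hx => (hderiv x ⟨hc.1.trans_lt hx.1, hx.2.trans_le hd.2⟩).hasDerivWithinAt)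
        ((intervalIntegrable_iff_integrableOn_Icc_of_le hcd).1 (hφ_sub hc hd))
        fun x hx => hle x ⟨hc.1.trans_lt hx.1, hx.2.trans_le hd.2⟩
    have hsplit := integral_interval_sub_left (hφ_sub (left_mem_Icc.2 hab) hd)
      (hφ_sub (left_mem_Icc.2 hab) hc)
    simp only [ψ]
    linarith
  have hψ' : ∀ᵐ x, x ∈ uIoc a b → y' x = φ x - deriv ψ x := by
    have hb : ∀ᵐ x : ℝ, x ≠ b := by simp [ae_iff, measure_singleton]
    filter_upwards [hφ.ae_hasDerivAt_integral, hb] with x hΦ hxb hx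
    rw [uIoc_of_le hab] at hx
    have hx' : x ∈ Ioo a b := ⟨hx.1, lt_of_le_of_ne hx.2 hxb⟩
    have hxI : x ∈ uIcc a b := by rw [uIcc_of_le hab]; exact Ioc_subset_Icc_self hx
    rw [((hΦ hxI a left_mem_uIcc).fun_sub (hderiv x hx')).deriv]
    ring
  exact (intervalIntegrable_congr_ae ((ae_restrict_iff' measurableSet_uIoc).2 hψ')).2
    (hφ.sub hψ.intervalIntegrable_deriv)

theorem absolutelyContinuousOnInterval_of_hasDerivAt_of_le {y y' φ : ℝ → ℝ} {a b : ℝ}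
    (hab : a ≤ b) (hcont : ContinuousOn y (Icc a b))
    (hderiv : ∀ x ∈ Ioo a b, HasDerivAt y (y' x) x)
    (hφ : IntervalIntegrable φ volume a b) (hle : ∀ x ∈ Ioo a b, y' x ≤ φ x) :
    AbsolutelyContinuousOnInterval y a b := by
  have hy' := intervalIntegrable_deriv_of_le hab hcont hderiv hφ hle
  have hAC : AbsolutelyContinuousOnInterval (fun x => (∫ u in a..x, y' u) + y a) a b :=
    (hy'.absolutelyContinuousOnInterval_intervalIntegral left_mem_uIcc).fun_add
      (LipschitzWith.const (y a)).lipschitzOnWith.absolutelyContinuousOnInterval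
  refine hAC.congr fun x hx => ?_
  rw [uIcc_of_le hab] at hx
  dsimp only
  rw [integral_eq_sub_of_hasDerivAt_of_le hx.1 (hcont.mono (Icc_subset_Icc le_rfl hx.2))
    (fun z hz => hderiv z ⟨hz.1, hz.2.trans_le hx.2⟩)
    (hy'.mono_set (by rw [uIcc_of_le hab, uIcc_of_le hx.1]; exact Icc_subset_Icc le_rfl hx.2))]
  ring

theorem le_mul_exp_integral_of_hasDerivAt_le_mul_add {y y' g h : ℝ → ℝ} {a b : ℝ} (hab : a ≤ b)
    (hcont : ContinuousOn y (Icc a b)) (hderiv : ∀ x ∈ Ioo a b, HasDerivAt y (y' x) x)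
    (hg : IntervalIntegrable g volume a b) (hh : IntervalIntegrable h volume a b)
    (hg0 : ∀ x ∈ Ioo a b, 0 ≤ g x) (hh0 : ∀ x ∈ Ioo a b, 0 ≤ h x)
    (hineq : ∀ x ∈ Ioo a b, y' x ≤ g x * y x + h x) :
    y b ≤ (y a + ∫ x in a..b, h x) * Real.exp (∫ x in a..b, g x) := by
  set G : ℝ → ℝ := fun x => ∫ u in a..x, g u
  set E : ℝ → ℝ := fun x => Real.exp (-G x)
  have hE_le_one : ∀ x ∈ Ioo a b, E x ≤ 1 := by
    intro x hx
    have hGx : 0 ≤ G x := by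
      simpa using integral_mono_on_of_le_Ioo hx.1.le intervalIntegrable_const
        (hg.mono_set (by
          rw [uIcc_of_le hab, uIcc_of_le hx.1.le]; exact Icc_subset_Icc le_rfl hx.2.le))
        fun u hu => hg0 u ⟨hu.1, hu.2.trans hx.2⟩
    simpa [E] using hGx
  have hyAC : AbsolutelyContinuousOnInterval y a b :=
    absolutelyContinuousOnInterval_of_hasDerivAt_of_le hab hcont hderiv
      ((hg.mul_continuousOn (by rwa [uIcc_of_le hab])).add hh) hineq
  have hEAC : AbsolutelyContinuousOnInterval E a b :=
    Real.contDiff_exp.comp_absolutelyContinuousOnInterval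
      (hg.absolutelyContinuousOnInterval_intervalIntegral left_mem_uIcc).fun_neg
  have hYAC := hyAC.fun_mul hEAC
  have hderivY : ∀ᵐ x, x ∈ Ioo a b → deriv (fun x => y x * E x) x ≤ h x := by
    filter_upwards [hg.ae_hasDerivAt_integral] with x hG hx
    have hGx : HasDerivAt G (g x) x :=
      hG (by rw [uIcc_of_le hab]; exact Ioo_subset_Icc_self hx) a left_mem_uIcc
    have hYx : HasDerivAt (fun x => y x * E x) (y' x * E x + y x * (E x * -g x)) x :=
      (hderiv x hx).mul hGx.neg.exp
    rw [hYx.deriv]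
    calc y' x * E x + y x * (E x * -g x) = (y' x - g x * y x) * E x := by ring
      _ ≤ h x * E x := mul_le_mul_of_nonneg_right (by linarith [hineq x hx]) (Real.exp_pos _).le
      _ ≤ h x := mul_le_of_le_one_right (hh0 x hx) (hE_le_one x hx)
  have hmain : y b * E b - y a * E a ≤ ∫ x in a..b, h x := by
    rw [← hYAC.integral_deriv_eq_sub, integral_of_le hab, integral_of_le hab,
      integral_Ioc_eq_integral_Ioo, integral_Ioc_eq_integral_Ioo]
    exact setIntegral_mono_on_ae (hYAC.intervalIntegrable_deriv.1.mono_set Ioo_subset_Ioc_self)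
      (hh.1.mono_set Ioo_subset_Ioc_self) measurableSet_Ioo hderivY
  have hEa : E a = 1 := by simp [E, G]
  have hEb : E b * Real.exp (G b) = 1 := by simp [E, ← Real.exp_add]
  calc y b = y b * E b * Real.exp (G b) := by rw [mul_assoc, hEb, mul_one]
    _ ≤ (y a + ∫ x in a..b, h x) * Real.exp (G b) := by
      gcongr
      rw [hEa, mul_one] at hmain
      linarith

theorem stmt_4_general (t₀ r a₁ a₂ a₃ : ℝ) (g h y : ℝ → ℝ)
    (hr : 0 < r)
    (hg0 : ∀ t, t₀ < t → 0 ≤ g t) (hh0 : ∀ t, t₀ < t → 0 ≤ h t)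
    (hy0 : ∀ t, t₀ < t → 0 ≤ y t)
    (hgi : ∀ t, t₀ ≤ t → IntervalIntegrable g volume t (t + r))
    (hhi : ∀ t, t₀ ≤ t → IntervalIntegrable h volume t (t + r))
    (hyi : ∀ t, t₀ ≤ t → IntervalIntegrable y volume t (t + r))
    (hy' : ∀ t, t₀ < t → HasDerivAt y (deriv y t) t)
    (hineq : ∀ t, t₀ < t → deriv y t ≤ g t * y t + h t)
    (hg : ∀ t, t₀ ≤ t → ∫ s in t..(t + r), g s ≤ a₁)
    (hh : ∀ t, t₀ ≤ t → ∫ s in t..(t + r), h s ≤ a₂)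
    (hy : ∀ t, t₀ ≤ t → ∫ s in t..(t + r), y s ≤ a₃) :
    ∀ t, t₀ ≤ t → y (t + r) ≤ (a₃ / r + a₂) * Real.exp a₁ := by
  intro t ht
  have htr : t ≤ t + r := by linarith
  have tail_le {f : ℝ → ℝ} (hf0 : ∀ x, t₀ < x → 0 ≤ f x)
      (hfi : IntervalIntegrable f volume t (t + r)) {s : ℝ} (hs : s ∈ Icc t (t + r)) :
      ∫ x in s..(t + r), f x ≤ ∫ x in t..(t + r), f x :=
    integral_mono_interval hs.1 hs.2 le_rfl ((ae_restrict_iff' measurableSet_Ioc).2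
      (Eventually.of_forall fun x hx => hf0 x (ht.trans_lt hx.1))) hfi
  have ha₂ : 0 ≤ a₂ :=
    le_trans (by simpa using tail_le hh0 (hhi t ht) (right_mem_Icc.2 htr)) (hh t ht)
  have key : ∀ s ∈ Ioo t (t + r), y (t + r) ≤ (y s + a₂) * Real.exp a₁ := by
    intro s hs
    have hs₀ : t₀ < s := ht.trans_lt hs.1
    have hsub : uIcc s (t + r) ⊆ uIcc t (t + r) := by
      rw [uIcc_of_le hs.2.le, uIcc_of_le htr]; exact Icc_subset_Icc hs.1.le le_rfl
    have hI := le_mul_exp_integral_of_hasDerivAt_le_mul_add hs.2.le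
      (fun x hx => (hy' x (hs₀.trans_le hx.1)).continuousAt.continuousWithinAt)
      (fun x hx => hy' x (hs₀.trans hx.1)) ((hgi t ht).mono_set hsub) ((hhi t ht).mono_set hsub)
      (fun x hx => hg0 x (hs₀.trans hx.1)) (fun x hx => hh0 x (hs₀.trans hx.1))
      (fun x hx => hineq x (hs₀.trans hx.1))
    have hs' : s ∈ Icc t (t + r) := ⟨hs.1.le, hs.2.le⟩
    refine hI.trans (mul_le_mul ?_ ?_ (Real.exp_pos _).le (add_nonneg (hy0 s hs₀) ha₂))
    · linarith [tail_le hh0 (hhi t ht) hs', hh t ht]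
    · exact Real.exp_le_exp.2 ((tail_le hg0 (hgi t ht) hs').trans (hg t ht))
  have hr_mul : r * y (t + r) ≤ (a₃ + r * a₂) * Real.exp a₁ :=
    calc r * y (t + r) = ∫ _ in t..(t + r), y (t + r) := by simp
      _ ≤ ∫ s in t..(t + r), (y s + a₂) * Real.exp a₁ :=
        integral_mono_on_of_le_Ioo htr intervalIntegrable_const
          (((hyi t ht).add intervalIntegrable_const).mul_const _) key
      _ = ((∫ s in t..(t + r), y s) + r * a₂) * Real.exp a₁ := by
        rw [intervalIntegral.integral_mul_const, integral_add (hyi t ht) intervalIntegrable_const]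
        simp
      _ ≤ (a₃ + r * a₂) * Real.exp a₁ := by gcongr; exact hy t ht
  rw [div_add' _ _ _ hr.ne', div_mul_eq_mul_div, le_div_iff₀ hr]
  linarith

/-- Uniform Gronwall inequality (Foias–Prodi). -/
theorem stmt_4 (t₀ r a₁ a₂ a₃ : ℝ) (g h y : ℝ → ℝ)
    (hr : 0 < r) (ha₁ : 0 < a₁) (ha₂ : 0 < a₂) (ha₃ : 0 < a₃)
    (hg0 : ∀ t, t₀ < t → 0 ≤ g t) (hh0 : ∀ t, t₀ < t → 0 ≤ h t)
    (hy0 : ∀ t, t₀ < t → 0 ≤ y t)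
    (hgi : ∀ t, t₀ ≤ t → IntervalIntegrable g volume t (t + r))
    (hhi : ∀ t, t₀ ≤ t → IntervalIntegrable h volume t (t + r))
    (hyi : ∀ t, t₀ ≤ t → IntervalIntegrable y volume t (t + r))
    (hy' : ∀ t, t₀ < t → HasDerivAt y (deriv y t) t)
    (hineq : ∀ t, t₀ < t → deriv y t ≤ g t * y t + h t)
    (hg : ∀ t, t₀ ≤ t → ∫ s in t..(t + r), g s ≤ a₁)
    (hh : ∀ t, t₀ ≤ t → ∫ s in t..(t + r), h s ≤ a₂)
    (hy : ∀ t, t₀ ≤ t → ∫ s in t..(t + r), y s ≤ a₃) :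
    ∀ t, t₀ ≤ t → y (t + r) ≤ (a₃ / r + a₂) * Real.exp a₁ :=
  stmt_4_general t₀ r a₁ a₂ a₃ g h y hr hg0 hh0 hy0 hgi hhi hyi hy' hineq hg hh hy
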